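/- Let d ≥ 1, σ > 0, let b : ℝ × ℝ^d → ℝ^d be twice continuously differentiable and u : ℝ × ℝ^d → ℝ^d be three times continuously differentiable (jointly in (t,x)). Write ∂_t for the time partial derivative and ∂_i for the i-th spatial partial derivative. Suppose that for all (t,x) and every j: ∂_t u_j + (σ²/2) ∑_k ∂_k ∂_k u_j + ∑_k (∂_j b_k) u_k + ∑_k b_k ∂_k u_j + ∑_k u_k ∂_k u_j = 0. Define the vorticity Ω_{ij}(t,x) = ∂_i u_j(t,x) − ∂_j u_i(t,x) and C_{ik}(t,x) = ∂_i (b_k + u_k)(t,x). Then for all (t,x) and all indices i,j: ∂_t Ω_{ij} + ∑_k (b_k + u_k) ∂_k Ω_{ij} + (σ²/2) ∑_k ∂_k ∂_k Ω_{ij} + ∑_k C_{ik} Ω_{kj} + ∑_k Ω_{ik} C_{jk} = 0. -/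

import Mathlib

/-- Time partial derivative of a function on `ℝ × ℝ^d`. -/
noncomputable def pt {d : ℕ} (f : ℝ × (Fin d → ℝ) → ℝ) (p : ℝ × (Fin d → ℝ)) : ℝ :=
  fderiv ℝ f p (1, 0)

/-- `i`-th spatial partial derivative of a function on `ℝ × ℝ^d`. -/
noncomputable def px {d : ℕ} (i : Fin d) (f : ℝ × (Fin d → ℝ) → ℝ)
    (p : ℝ × (Fin d → ℝ)) : ℝ :=
  fderiv ℝ f p (0, Pi.single i 1)

/-- Directional derivative, as a function. -/
noncomputable def dd {E : Type*} [NormedAddCommGroup E] [NormedSpace ℝ E]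
    (v : E) (f : E → ℝ) (p : E) : ℝ := fderiv ℝ f p v

/-- The time direction. -/
noncomputable def tv (d : ℕ) : ℝ × (Fin d → ℝ) := (1, 0)

/-- The `i`-th spatial direction. -/
noncomputable def sv {d : ℕ} (i : Fin d) : ℝ × (Fin d → ℝ) := (0, Pi.single i 1)

lemma pt_eq {d : ℕ} (f : ℝ × (Fin d → ℝ) → ℝ) : pt f = dd (tv d) f := rfl

lemma px_eq {d : ℕ} (i : Fin d) (f : ℝ × (Fin d → ℝ) → ℝ) : px i f = dd (sv i) f := rfl

section dd_lemmas
variable {E : Type*} [NormedAddCommGroup E] [NormedSpace ℝ E] {f g : E → ℝ} {p v w : E}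

lemma dd_contDiff {n m : WithTop ℕ∞} (hf : ContDiff ℝ n f) (h : m + 1 ≤ n) (v : E) :
    ContDiff ℝ m (dd v f) :=
  (ContinuousLinearMap.apply ℝ ℝ v).contDiff.comp (hf.fderiv_right h)

lemma dd_swap {n : WithTop ℕ∞} (hf : ContDiff ℝ n f) (hn : 2 ≤ n) (v w p : E) :
    dd v (dd w f) p = dd w (dd v f) p := by
  have hdf : DifferentiableAt ℝ (fderiv ℝ f) p :=
    ((hf.fderiv_right (le_trans (by norm_num) hn : (1:WithTop ℕ∞) + 1 ≤ n)).differentiable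
      one_ne_zero).differentiableAt
  have h1 : ∀ z : E, fderiv ℝ (fun q => fderiv ℝ f q z) p = (fderiv ℝ (fderiv ℝ f) p).flip z := by
    intro z
    have := fderiv_clm_apply (c := fderiv ℝ f) (u := fun _ => z) hdf (differentiableAt_const z)
    simpa using this
  show fderiv ℝ (fun q => fderiv ℝ f q w) p v = fderiv ℝ (fun q => fderiv ℝ f q v) p w
  rw [h1 w, h1 v]
  exact ((hf.contDiffAt.isSymmSndFDerivAt (by simpa [minSmoothness_of_isRCLikeNormedField] using hn)) w v).symm

lemma dd_add (hf : DifferentiableAt ℝ f p) (hg : DifferentiableAt ℝ g p) :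
    dd v (fun q => f q + g q) p = dd v f p + dd v g p := by
  simp [dd, fderiv_fun_add hf hg]

lemma dd_sub (hf : DifferentiableAt ℝ f p) (hg : DifferentiableAt ℝ g p) :
    dd v (fun q => f q - g q) p = dd v f p - dd v g p := by
  simp [dd, fderiv_fun_sub hf hg]

lemma dd_mul (hf : DifferentiableAt ℝ f p) (hg : DifferentiableAt ℝ g p) :
    dd v (fun q => f q * g q) p = dd v f p * g p + f p * dd v g p := by
  simp [dd, fderiv_fun_mul hf hg]; ring

lemma dd_const_mul (c : ℝ) (hf : DifferentiableAt ℝ f p) :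
    dd v (fun q => c * f q) p = c * dd v f p := by
  simp [dd, fderiv_const_mul hf c]

lemma dd_zero : dd v (fun _ => (0:ℝ)) p = 0 := by simp [dd]

lemma dd_sum {ι : Type*} (s : Finset ι) {F : ι → E → ℝ}
    (h : ∀ k ∈ s, DifferentiableAt ℝ (F k) p) :
    dd v (fun q => ∑ k ∈ s, F k q) p = ∑ k ∈ s, dd v (F k) p := by
  simp [dd, fderiv_fun_sum h]

end dd_lemmas

/-- The vorticity `Ω = ∇u − (∇u)ᵀ` of a solution of the self-consistency PDE
`∂_t u + (σ²/2)Δu + (∇b)u + (b·∇)u + (u·∇)u = 0` solves the linear parabolic PDE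
`(∂_t + (b+u)·∇ + (σ²/2)Δ)Ω + CΩ + ΩCᵀ = 0` with `C = ∇(b+u)`
(proof of Theorem C.2, equivalence (iii) ⟺ (iv)). -/
theorem vorticity_parabolic_PDE {d : ℕ} (hd : 1 ≤ d) (σ : ℝ) (hσ : 0 < σ)
    (b : ℝ × (Fin d → ℝ) → Fin d → ℝ) (hb : ContDiff ℝ 2 b)
    (u : ℝ × (Fin d → ℝ) → Fin d → ℝ) (hu : ContDiff ℝ 3 u)
    (hPDE : ∀ (p : ℝ × (Fin d → ℝ)) (j : Fin d),
      pt (fun q => u q j) p + (σ^2/2) * (∑ k, px k (px k (fun q => u q j)) p)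
        + (∑ k, px j (fun q => b q k) p * u p k)
        + (∑ k, b p k * px k (fun q => u q j) p)
        + (∑ k, u p k * px k (fun q => u q j) p) = 0)
    (Om : Fin d → Fin d → ℝ × (Fin d → ℝ) → ℝ)
    (hOm : ∀ i j, Om i j = fun p => px i (fun q => u q j) p - px j (fun q => u q i) p)
    (C : Fin d → Fin d → ℝ × (Fin d → ℝ) → ℝ)
    (hC : ∀ i k, C i k = fun p => px i (fun q => b q k + u q k) p) :
    ∀ (p : ℝ × (Fin d → ℝ)) (i j : Fin d),
      pt (Om i j) p + (∑ k, (b p k + u p k) * px k (Om i j) p)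
        + (σ^2/2) * (∑ k, px k (px k (Om i j)) p)
        + (∑ k, C i k p * Om k j p)
        + (∑ k, Om i k p * C j k p) = 0 := by
  intro p i j
  have hu' : ∀ m : Fin d, ContDiff ℝ 3 (fun q => u q m) := fun m => contDiff_pi.mp hu m
  have hb' : ∀ m : Fin d, ContDiff ℝ 2 (fun q => b q m) := fun m => contDiff_pi.mp hb m
  have hdu : ∀ (w : ℝ × (Fin d → ℝ)) (m : Fin d), ContDiff ℝ 2 (dd w (fun q => u q m)) :=
    fun w m => dd_contDiff (hu' m) (by norm_num) w
  have hddu : ∀ (w w' : ℝ × (Fin d → ℝ)) (m : Fin d),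
      ContDiff ℝ 1 (dd w (dd w' (fun q => u q m))) :=
    fun w w' m => dd_contDiff (hdu w' m) (by norm_num) w
  have hdb : ∀ (w : ℝ × (Fin d → ℝ)) (m : Fin d), ContDiff ℝ 1 (dd w (fun q => b q m)) :=
    fun w m => dd_contDiff (hb' m) (by norm_num) w
  have A1 : ∀ {f : ℝ × (Fin d → ℝ) → ℝ}, ContDiff ℝ 1 f → ∀ q, DifferentiableAt ℝ f q :=
    fun h q => h.differentiable one_ne_zero q
  have A2 : ∀ {f : ℝ × (Fin d → ℝ) → ℝ}, ContDiff ℝ 2 f → ∀ q, DifferentiableAt ℝ f q :=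
    fun h q => h.differentiable (by norm_num) q
  have A3 : ∀ {f : ℝ × (Fin d → ℝ) → ℝ}, ContDiff ℝ 3 f → ∀ q, DifferentiableAt ℝ f q :=
    fun h q => h.differentiable (by norm_num) q
  have key : ∀ a c : Fin d,
      dd (tv d) (dd (sv a) fun q => u q c) p
        + σ ^ 2 / 2 * ∑ k, dd (sv k) (dd (sv k) (dd (sv a) fun q => u q c)) p
        + ∑ k, (dd (sv a) (dd (sv c) fun q => b q k) p * u p k
            + dd (sv c) (fun q => b q k) p * dd (sv a) (fun q => u q k) p)
        + ∑ k, (dd (sv a) (fun q => b q k) p * dd (sv k) (fun q => u q c) p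
            + b p k * dd (sv k) (dd (sv a) fun q => u q c) p)
        + ∑ k, (dd (sv a) (fun q => u q k) p * dd (sv k) (fun q => u q c) p
            + u p k * dd (sv k) (dd (sv a) fun q => u q c) p) = 0 := by
    intro a c
    have hF : (fun q => dd (tv d) (fun r => u r c) q
        + σ ^ 2 / 2 * ∑ k, dd (sv k) (dd (sv k) fun r => u r c) q
        + ∑ k, dd (sv c) (fun r => b r k) q * u q k
        + ∑ k, b q k * dd (sv k) (fun r => u r c) q
        + ∑ k, u q k * dd (sv k) (fun r => u r c) q) = fun _ => (0:ℝ) := by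
      funext q
      simpa only [pt_eq, px_eq] using hPDE q c
    have h0 : dd (sv a) (fun q => dd (tv d) (fun r => u r c) q
        + σ ^ 2 / 2 * ∑ k, dd (sv k) (dd (sv k) fun r => u r c) q
        + ∑ k, dd (sv c) (fun r => b r k) q * u q k
        + ∑ k, b q k * dd (sv k) (fun r => u r c) q
        + ∑ k, u q k * dd (sv k) (fun r => u r c) q) p = 0 := by
      rw [hF]; exact dd_zero
    have d1 : DifferentiableAt ℝ (fun q => dd (tv d) (fun r => u r c) q) p := A2 (hdu _ _) p
    have d2 : DifferentiableAt ℝ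
        (fun q => σ ^ 2 / 2 * ∑ k, dd (sv k) (dd (sv k) fun r => u r c) q) p :=
      A1 (contDiff_const.mul (ContDiff.sum fun k _ => hddu _ _ _)) p
    have d3 : DifferentiableAt ℝ (fun q => ∑ k, dd (sv c) (fun r => b r k) q * u q k) p :=
      A1 (ContDiff.sum fun k _ => (hdb _ _).mul ((hu' k).of_le (by norm_num))) p
    have d4 : DifferentiableAt ℝ (fun q => ∑ k, b q k * dd (sv k) (fun r => u r c) q) p :=
      A1 (ContDiff.sum fun k _ =>
        ((hb' k).of_le (by norm_num)).mul ((hdu _ _).of_le (by norm_num))) p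
    have d5 : DifferentiableAt ℝ (fun q => ∑ k, u q k * dd (sv k) (fun r => u r c) q) p :=
      A1 (ContDiff.sum fun k _ =>
        ((hu' k).of_le (by norm_num)).mul ((hdu _ _).of_le (by norm_num))) p
    have e1 : dd (sv a) (fun q => dd (tv d) (fun r => u r c) q
        + σ ^ 2 / 2 * ∑ k, dd (sv k) (dd (sv k) fun r => u r c) q
        + ∑ k, dd (sv c) (fun r => b r k) q * u q k
        + ∑ k, b q k * dd (sv k) (fun r => u r c) q
        + ∑ k, u q k * dd (sv k) (fun r => u r c) q) p
        = dd (sv a) (fun q => dd (tv d) (fun r => u r c) q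
            + σ ^ 2 / 2 * ∑ k, dd (sv k) (dd (sv k) fun r => u r c) q
            + ∑ k, dd (sv c) (fun r => b r k) q * u q k
            + ∑ k, b q k * dd (sv k) (fun r => u r c) q) p
          + dd (sv a) (fun q => ∑ k, u q k * dd (sv k) (fun r => u r c) q) p :=
      dd_add (((d1.add d2).add d3).add d4) d5
    have e2 : dd (sv a) (fun q => dd (tv d) (fun r => u r c) q
        + σ ^ 2 / 2 * ∑ k, dd (sv k) (dd (sv k) fun r => u r c) q
        + ∑ k, dd (sv c) (fun r => b r k) q * u q k
        + ∑ k, b q k * dd (sv k) (fun r => u r c) q) p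
        = dd (sv a) (fun q => dd (tv d) (fun r => u r c) q
            + σ ^ 2 / 2 * ∑ k, dd (sv k) (dd (sv k) fun r => u r c) q
            + ∑ k, dd (sv c) (fun r => b r k) q * u q k) p
          + dd (sv a) (fun q => ∑ k, b q k * dd (sv k) (fun r => u r c) q) p :=
      dd_add ((d1.add d2).add d3) d4
    have e3 : dd (sv a) (fun q => dd (tv d) (fun r => u r c) q
        + σ ^ 2 / 2 * ∑ k, dd (sv k) (dd (sv k) fun r => u r c) q
        + ∑ k, dd (sv c) (fun r => b r k) q * u q k) p
        = dd (sv a) (fun q => dd (tv d) (fun r => u r c) q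
            + σ ^ 2 / 2 * ∑ k, dd (sv k) (dd (sv k) fun r => u r c) q) p
          + dd (sv a) (fun q => ∑ k, dd (sv c) (fun r => b r k) q * u q k) p :=
      dd_add (d1.add d2) d3
    have e4 : dd (sv a) (fun q => dd (tv d) (fun r => u r c) q
        + σ ^ 2 / 2 * ∑ k, dd (sv k) (dd (sv k) fun r => u r c) q) p
        = dd (sv a) (fun q => dd (tv d) (fun r => u r c) q) p
          + dd (sv a) (fun q => σ ^ 2 / 2 * ∑ k, dd (sv k) (dd (sv k) fun r => u r c) q) p :=
      dd_add d1 d2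
    have t1 : dd (sv a) (fun q => dd (tv d) (fun r => u r c) q) p
        = dd (tv d) (dd (sv a) fun q => u q c) p :=
      dd_swap (hu' c) (by norm_num) _ _ p
    have t2 : dd (sv a) (fun q => σ ^ 2 / 2 * ∑ k, dd (sv k) (dd (sv k) fun r => u r c) q) p
        = σ ^ 2 / 2 * ∑ k, dd (sv k) (dd (sv k) (dd (sv a) fun q => u q c)) p := by
      rw [dd_const_mul (σ ^ 2 / 2) (A1 (ContDiff.sum fun k _ => hddu _ _ _) p)]
      rw [dd_sum Finset.univ (fun k _ => A1 (hddu _ _ _) p)]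
      refine congrArg (fun x => σ ^ 2 / 2 * x) (Finset.sum_congr rfl fun k _ => ?_)
      rw [dd_swap (hdu (sv k) c) le_rfl (sv a) (sv k) p]
      rw [show (dd (sv a) (dd (sv k) fun r => u r c)) = dd (sv k) (dd (sv a) fun q => u q c)
        from funext fun q => dd_swap (hu' c) (by norm_num) _ _ q]
    have t3 : dd (sv a) (fun q => ∑ k, dd (sv c) (fun r => b r k) q * u q k) p
        = ∑ k, (dd (sv a) (dd (sv c) fun q => b q k) p * u p k
            + dd (sv c) (fun q => b q k) p * dd (sv a) (fun q => u q k) p) := by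
      rw [dd_sum Finset.univ
        (fun k _ => A1 ((hdb _ _).mul ((hu' k).of_le (by norm_num))) p)]
      exact Finset.sum_congr rfl fun k _ => dd_mul (A1 (hdb _ _) p) (A3 (hu' k) p)
    have t4 : dd (sv a) (fun q => ∑ k, b q k * dd (sv k) (fun r => u r c) q) p
        = ∑ k, (dd (sv a) (fun q => b q k) p * dd (sv k) (fun q => u q c) p
            + b p k * dd (sv k) (dd (sv a) fun q => u q c) p) := by
      rw [dd_sum Finset.univ (fun k _ => A1
        (((hb' k).of_le (by norm_num)).mul ((hdu _ _).of_le (by norm_num))) p)]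
      refine Finset.sum_congr rfl fun k _ => ?_
      rw [dd_mul (A2 (hb' k) p) (A2 (hdu _ _) p)]
      rw [show (dd (sv a) (dd (sv k) fun r => u r c)) = dd (sv k) (dd (sv a) fun q => u q c)
        from funext fun q => dd_swap (hu' c) (by norm_num) _ _ q]
    have t5 : dd (sv a) (fun q => ∑ k, u q k * dd (sv k) (fun r => u r c) q) p
        = ∑ k, (dd (sv a) (fun q => u q k) p * dd (sv k) (fun q => u q c) p
            + u p k * dd (sv k) (dd (sv a) fun q => u q c) p) := by
      rw [dd_sum Finset.univ (fun k _ => A1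
        (((hu' k).of_le (by norm_num)).mul ((hdu _ _).of_le (by norm_num))) p)]
      refine Finset.sum_congr rfl fun k _ => ?_
      rw [dd_mul (A3 (hu' k) p) (A2 (hdu _ _) p)]
      rw [show (dd (sv a) (dd (sv k) fun r => u r c)) = dd (sv k) (dd (sv a) fun q => u q c)
        from funext fun q => dd_swap (hu' c) (by norm_num) _ _ q]
    rw [e1, e2, e3, e4, t1, t2, t3, t4, t5] at h0
    exact h0
  have kij := key i j
  have kji := key j i
  have hsymB : ∀ k : Fin d,
      dd (sv j) (dd (sv i) fun q => b q k) p = dd (sv i) (dd (sv j) fun q => b q k) p :=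
    fun k => dd_swap (hb' k) le_rfl _ _ p
  simp only [hsymB] at kji
  have hOC : (∑ k, Om i k p * C j k p) = ∑ k, C j k p * Om i k p :=
    Finset.sum_congr rfl fun k _ => mul_comm _ _
  rw [hOC]
  simp only [hOm, hC, pt_eq, px_eq]
  have hg1 : dd (tv d) (fun q => dd (sv i) (fun r => u r j) q - dd (sv j) (fun r => u r i) q) p
      = dd (tv d) (dd (sv i) fun q => u q j) p - dd (tv d) (dd (sv j) fun q => u q i) p :=
    dd_sub (A2 (hdu _ _) p) (A2 (hdu _ _) p)
  have hg2 : ∀ k : Fin d,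
      dd (sv k) (fun q => dd (sv i) (fun r => u r j) q - dd (sv j) (fun r => u r i) q) p
      = dd (sv k) (dd (sv i) fun q => u q j) p - dd (sv k) (dd (sv j) fun q => u q i) p :=
    fun k => dd_sub (A2 (hdu _ _) p) (A2 (hdu _ _) p)
  have hg3 : ∀ k : Fin d,
      dd (sv k) (dd (sv k)
        (fun q => dd (sv i) (fun r => u r j) q - dd (sv j) (fun r => u r i) q)) p
      = dd (sv k) (dd (sv k) (dd (sv i) fun q => u q j)) p
        - dd (sv k) (dd (sv k) (dd (sv j) fun q => u q i)) p := by
    intro k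
    rw [show dd (sv k) (fun q => dd (sv i) (fun r => u r j) q - dd (sv j) (fun r => u r i) q)
        = fun q => dd (sv k) (dd (sv i) fun r => u r j) q - dd (sv k) (dd (sv j) fun r => u r i) q
      from funext fun q => dd_sub (A2 (hdu _ _) q) (A2 (hdu _ _) q)]
    exact dd_sub (A1 (hddu _ _ _) p) (A1 (hddu _ _ _) p)
  have hg4 : ∀ (m : Fin d) (k : Fin d),
      dd (sv m) (fun q => b q k + u q k) p
      = dd (sv m) (fun q => b q k) p + dd (sv m) (fun q => u q k) p :=
    fun m k => dd_add (A2 (hb' k) p) (A3 (hu' k) p)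
  rw [hg1]
  simp only [hg2, hg3, hg4]
  have hcomm : (∑ k, dd (sv j) (fun q => u q k) p * dd (sv i) (fun q => u q k) p)
      = ∑ k, dd (sv i) (fun q => u q k) p * dd (sv j) (fun q => u q k) p :=
    Finset.sum_congr rfl fun k _ => mul_comm _ _
  simp only [mul_sub, sub_mul, mul_add, add_mul, Finset.sum_add_distrib,
    Finset.sum_sub_distrib] at kij kji ⊢
  linarith [kij, kji, hcomm]
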